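/- Let w ~ N(0,(1/d)I_d), x with ‖x‖ = √d, and δ with ‖δ‖ ≤ √d/2, and let 0 < ε ≤ 1. Then P(∃ δ' with ‖δ−δ'‖ ≤ ε and sign(w·(x+δ)) ≠ sign(w·(x+δ'))) ≤ 2ε(1 + 2√(log(2/ε)/d)). -/

import Mathlib

/-!
If `sign ⟪w, x + δ'⟫` changes for some `δ'` within `ε` of `δ`, then `|⟪w, x + δ⟫| ≤ ε ‖w‖`.
Put `r = √(log (2/ε) / d)`. Either `‖w‖ ≥ 1 + 2r`, which by a Chernoff bound for the chi-square
variable `‖w‖²` has probability at most `exp (-2 d r²) = ε²/4`; or the Gaussian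
`⟪w, x + δ⟫ ~ N(0, ‖x + δ‖² / d)`, whose variance is at least `1/4`, lies in
`[-ε(1 + 2r), ε(1 + 2r)]`, which by the density bound `1/√(2πσ²)` has probability at most
`(7/4) ε (1 + 2r)`. As `ε ≤ 1`, the two add up to at most `2ε(1 + 2r)`.
-/

open MeasureTheory ProbabilityTheory Real
open scoped RealInnerProductSpace ENNReal NNReal

lemma Real.abs_le_abs_sub_of_sign_ne {a b : ℝ} (h : Real.sign a ≠ Real.sign b) :
    |a| ≤ |a - b| := by
  rcases lt_trichotomy a 0 with ha | rfl | ha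
  · have hb : 0 ≤ b := not_lt.1 fun hb => h (by rw [sign_of_neg ha, sign_of_neg hb])
    rw [abs_of_neg ha, abs_of_neg (by linarith)]
    linarith
  · simp
  · have hb : b ≤ 0 := not_lt.1 fun hb => h (by rw [sign_of_pos ha, sign_of_pos hb])
    rw [abs_of_pos ha, abs_of_pos (by linarith)]
    linarith

lemma abs_real_inner_le_of_sign_ne {E : Type*} [NormedAddCommGroup E] [InnerProductSpace ℝ E]
    {w u u' : E} (h : Real.sign ⟪w, u⟫ ≠ Real.sign ⟪w, u'⟫) : |⟪w, u⟫| ≤ ‖w‖ * ‖u - u'‖ :=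
  calc |⟪w, u⟫| ≤ |⟪w, u⟫ - ⟪w, u'⟫| := abs_le_abs_sub_of_sign_ne h
    _ = |⟪w, u - u'⟫| := by rw [inner_sub_right]
    _ ≤ ‖w‖ * ‖u - u'‖ := abs_real_inner_le_norm _ _

lemma setOf_exists_sign_inner_ne_subset {Ω E : Type*} [NormedAddCommGroup E]
    [InnerProductSpace ℝ E] (w : Ω → E) (x δ : E) (ε s : ℝ) :
    {ω | ∃ δ' : E, ‖δ - δ'‖ ≤ ε ∧ Real.sign ⟪w ω, x + δ⟫ ≠ Real.sign ⟪w ω, x + δ'⟫} ⊆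
      {ω | s ≤ ‖w ω‖} ∪ {ω | |⟪w ω, x + δ⟫| ≤ ε * s} := by
  rintro ω ⟨δ', hδ', hsign⟩
  refine (le_or_gt s ‖w ω‖).imp id fun hw => ?_
  calc |⟪w ω, x + δ⟫| ≤ ‖w ω‖ * ‖x + δ - (x + δ')‖ := abs_real_inner_le_of_sign_ne hsign
    _ ≤ s * ε := by
      rw [add_sub_add_left_eq_sub]
      gcongr
      exact (norm_nonneg _).trans hw.le
    _ = ε * s := mul_comm _ _

lemma Real.one_add_two_mul_mul_exp_le (r : ℝ) :
    (1 + 2 * r) * exp (-((1 + 2 * r) ^ 2 - 1) / 2) ≤ exp (-2 * r ^ 2) :=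
  calc (1 + 2 * r) * exp (-((1 + 2 * r) ^ 2 - 1) / 2)
      ≤ exp (2 * r) * exp (-((1 + 2 * r) ^ 2 - 1) / 2) := by
        gcongr
        linarith [add_one_le_exp (2 * r)]
    _ = exp (-2 * r ^ 2) := by
        rw [← exp_add]
        ring_nf

lemma sq_div_two_le_norm_add_sq {E : Type*} [SeminormedAddCommGroup E] {x δ : E} {a : ℝ}
    (hx : ‖x‖ = a) (hδ : ‖δ‖ ≤ a / 2) : (a / 2) ^ 2 ≤ ‖x + δ‖ ^ 2 := by
  have h := norm_sub_le_norm_add x δ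
  gcongr
  · linarith [norm_nonneg δ]
  · linarith

lemma Real.exp_neg_two_mul_log_two_div {ε : ℝ} (hε : 0 < ε) :
    exp (-2 * log (2 / ε)) = ε ^ 2 / 4 := by
  rw [neg_mul, exp_neg, two_mul, exp_add, exp_log (by positivity)]
  field_simp
  ring

lemma Real.two_mul_div_sqrt_two_pi_mul_le {a V : ℝ} (ha : 0 ≤ a) (hV : 1 / 4 ≤ V) :
    2 * a / √(2 * π * V) ≤ 7 / 4 * a := by
  have h : 8 / 7 ≤ √(2 * π * V) :=
    (le_sqrt (by norm_num) (by positivity)).2 (by nlinarith [pi_gt_three])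
  calc 2 * a / √(2 * π * V) ≤ 2 * a / (8 / 7) := by gcongr
    _ = 7 / 4 * a := by ring

namespace ProbabilityTheory

variable {Ω ι : Type*} {mΩ : MeasurableSpace Ω} {μ : Measure Ω}

lemma aemeasurable_of_map_eq_gaussianReal {X : Ω → ℝ} {m : ℝ} {v : ℝ≥0}
    (h : μ.map X = gaussianReal m v) : AEMeasurable X μ :=
  AEMeasurable.of_map_ne_zero (h ▸ IsProbabilityMeasure.ne_zero _)

lemma map_finsetSum_eq_gaussianReal {X : ι → Ω → ℝ} (hind : iIndepFun X μ) {m : ι → ℝ}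
    {v : ι → ℝ≥0} (hlaw : ∀ i, μ.map (X i) = gaussianReal (m i) (v i)) (s : Finset ι) :
    μ.map (∑ i ∈ s, X i) = gaussianReal (∑ i ∈ s, m i) (∑ i ∈ s, v i) := by
  have := hind.isProbabilityMeasure
  classical
  induction s using Finset.induction_on with
  | empty => simp [Pi.zero_def, Measure.map_const, gaussianReal_zero_var]
  | insert j s hj ih =>
    simp only [Finset.sum_insert hj]
    exact gaussianReal_add_gaussianReal_of_indepFun
      (hind.indepFun_finsetSum_of_notMem₀ (fun i => aemeasurable_of_map_eq_gaussianReal (hlaw i))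
        hj).symm (hlaw j) ih

lemma map_inner_eq_gaussianReal [Fintype ι] {w : Ω → EuclideanSpace ℝ ι}
    (hind : iIndepFun (fun i ω => w ω i) μ) {v : ℝ≥0}
    (hlaw : ∀ i, μ.map (fun ω => w ω i) = gaussianReal 0 v) (u : EuclideanSpace ℝ ι) :
    μ.map (fun ω => ⟪w ω, u⟫) = gaussianReal 0 (‖u‖₊ ^ 2 * v) := by
  have hlaw' (i : ι) : μ.map ((fun y => u i * y) ∘ fun ω => w ω i) =
      gaussianReal 0 (.mk (u i ^ 2) (sq_nonneg _) * v) := by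
    rw [← AEMeasurable.map_map_of_aemeasurable (measurable_const_mul _).aemeasurable
      (aemeasurable_of_map_eq_gaussianReal (hlaw i)), hlaw i, gaussianReal_map_const_mul, mul_zero]
  have hsum := map_finsetSum_eq_gaussianReal
    (hind.comp (fun i y => u i * y) fun i => measurable_const_mul (u i)) hlaw' Finset.univ
  convert hsum using 2
  · ext ω
    simp [PiLp.inner_apply, mul_comm]
  · simp
  · ext
    simp [Finset.sum_mul, EuclideanSpace.norm_sq_eq]

lemma gaussianPDFReal_le (m : ℝ) (v : ℝ≥0) (x : ℝ) : gaussianPDFReal m v x ≤ (√(2 * π * v))⁻¹ :=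
  mul_le_of_le_one_right (by positivity)
    (exp_le_one_iff.2 (div_nonpos_of_nonpos_of_nonneg (neg_nonpos.2 (sq_nonneg _)) (by positivity)))

lemma gaussianReal_Icc_le (m : ℝ) {v : ℝ≥0} (hv : v ≠ 0) (a b : ℝ) :
    gaussianReal m v (Set.Icc a b) ≤ ENNReal.ofReal ((b - a) / √(2 * π * v)) := by
  rw [gaussianReal_apply m hv]
  calc ∫⁻ x in Set.Icc a b, gaussianPDF m v x
      ≤ ∫⁻ _ in Set.Icc a b, ENNReal.ofReal (√(2 * π * v))⁻¹ :=
        lintegral_mono fun x => ENNReal.ofReal_le_ofReal (gaussianPDFReal_le m v x)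
    _ = ENNReal.ofReal ((b - a) / √(2 * π * v)) := by
        rw [setLIntegral_const, Real.volume_Icc, ← ENNReal.ofReal_mul (by positivity), mul_comm,
          div_eq_mul_inv]

lemma measure_abs_inner_le_le [Fintype ι] {w : Ω → EuclideanSpace ℝ ι}
    (hind : iIndepFun (fun i ω => w ω i) μ) {v : ℝ≥0} (hv : v ≠ 0)
    (hlaw : ∀ i, μ.map (fun ω => w ω i) = gaussianReal 0 v) {u : EuclideanSpace ℝ ι} (hu : u ≠ 0)
    (a : ℝ) :
    μ {ω | |⟪w ω, u⟫| ≤ a} ≤ ENNReal.ofReal (2 * a / √(2 * π * (‖u‖ ^ 2 * v))) := by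
  have hmap := map_inner_eq_gaussianReal hind hlaw u
  have hset : {ω | |⟪w ω, u⟫| ≤ a} = (fun ω => ⟪w ω, u⟫) ⁻¹' Set.Icc (-a) a := by
    ext ω
    simp [abs_le]
  rw [hset, ← Measure.map_apply_of_aemeasurable (aemeasurable_of_map_eq_gaussianReal hmap)
    measurableSet_Icc, hmap]
  refine (gaussianReal_Icc_le 0 (by simpa using ⟨hu, hv⟩) _ _).trans_eq ?_
  congr 2
  ring

lemma gaussianPDFReal_zero_mul_exp_mul_sq {v : ℝ≥0} (hv : v ≠ 0) (t x : ℝ) :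
    gaussianPDFReal 0 v x * exp (t * x ^ 2) =
      (√(2 * π * v))⁻¹ * exp (-(1 / (2 * v) - t) * x ^ 2) := by
  rw [gaussianPDFReal, mul_assoc, ← exp_add]
  congr 2
  field_simp
  ring

lemma integrable_exp_mul_sq_gaussianReal {v : ℝ≥0} {t : ℝ} (ht : 2 * t * v < 1) :
    Integrable (fun x => exp (t * x ^ 2)) (gaussianReal 0 v) := by
  rcases eq_or_ne v 0 with rfl | hv
  · simp [integrable_dirac]
  have hk : 0 < 1 / (2 * v) - t := by
    rw [sub_pos, lt_div_iff₀ (by positivity)]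
    linarith
  rw [gaussianReal_of_var_ne_zero 0 hv, integrable_withDensity_iff_integrable_smul'
    (measurable_gaussianPDF 0 v) (ae_of_all _ fun _ => gaussianPDF_lt_top)]
  simp_rw [toReal_gaussianPDF, smul_eq_mul, gaussianPDFReal_zero_mul_exp_mul_sq hv]
  exact (integrable_exp_neg_mul_sq hk).const_mul _

lemma integral_exp_mul_sq_gaussianReal {v : ℝ≥0} {t : ℝ} (ht : 2 * t * v < 1) :
    ∫ x, exp (t * x ^ 2) ∂gaussianReal 0 v = (√(1 - 2 * t * v))⁻¹ := by
  rcases eq_or_ne v 0 with rfl | hv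
  · simp
  have hk : 1 / (2 * v) - t = (1 - 2 * t * v) / (2 * v) := by field_simp
  have h1 : 0 < 1 - 2 * t * v := by linarith
  simp_rw [integral_gaussianReal_eq_integral_smul hv, smul_eq_mul,
    gaussianPDFReal_zero_mul_exp_mul_sq hv, integral_const_mul, integral_gaussian, hk,
    div_div_eq_mul_div, sqrt_div' _ h1.le, div_eq_mul_inv]
  rw [show π * (2 * v) = 2 * π * v by ring, inv_mul_cancel_left₀ (by positivity)]

lemma mgf_sq_of_map_eq_gaussianReal {X : Ω → ℝ} (hX : Measurable X) {v : ℝ≥0}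
    (hlaw : μ.map X = gaussianReal 0 v) {t : ℝ} (ht : 2 * t * v < 1) :
    mgf (fun ω => X ω ^ 2) μ t = (√(1 - 2 * t * v))⁻¹ := by
  rw [mgf, ← integral_exp_mul_sq_gaussianReal ht, ← hlaw,
    integral_map hX.aemeasurable (by fun_prop)]

lemma integrable_exp_mul_sq_of_map_eq_gaussianReal {X : Ω → ℝ} (hX : Measurable X) {v : ℝ≥0}
    (hlaw : μ.map X = gaussianReal 0 v) {t : ℝ} (ht : 2 * t * v < 1) :
    Integrable (fun ω => exp (t * X ω ^ 2)) μ := by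
  have h := integrable_exp_mul_sq_gaussianReal ht
  rw [← hlaw] at h
  exact (integrable_map_measure (by fun_prop) hX.aemeasurable).1 h

/-- Chernoff bound for a chi-square variable, at the optimal exponent `(1 - s⁻²) / (2v)`. -/
lemma measure_sum_sq_ge_le [Fintype ι] {X : ι → Ω → ℝ} (hX : ∀ i, Measurable (X i))
    (hind : iIndepFun X μ) {v : ℝ≥0} (hv : v ≠ 0) (hlaw : ∀ i, μ.map (X i) = gaussianReal 0 v)
    {s : ℝ} (hs : 1 ≤ s) :
    μ {ω | s ^ 2 * (Fintype.card ι * v) ≤ ∑ i, X i ω ^ 2} ≤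
      ENNReal.ofReal ((s * exp (-(s ^ 2 - 1) / 2)) ^ Fintype.card ι) := by
  have := hind.isProbabilityMeasure
  have hv' : (0 : ℝ) < v := by positivity
  set t : ℝ := (1 - (s ^ 2)⁻¹) / (2 * v) with ht_def
  have ht0 : 0 ≤ t :=
    div_nonneg (sub_nonneg.2 (inv_le_one_of_one_le₀ (one_le_pow₀ hs))) (by positivity)
  have htv : 1 - 2 * t * v = (s ^ 2)⁻¹ := by rw [ht_def]; field_simp; ring
  have ht : 2 * t * v < 1 := by linarith [htv, inv_pos.2 (by positivity : (0:ℝ) < s ^ 2)]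
  have hY : iIndepFun (fun i ω => X i ω ^ 2) μ :=
    hind.comp (fun _ y => y ^ 2) fun _ => measurable_id.pow_const 2
  have hYmeas (i : ι) : Measurable fun ω => X i ω ^ 2 := (hX i).pow_const 2
  have hmgf (i : ι) : mgf (fun ω => X i ω ^ 2) μ t = s := by
    rw [mgf_sq_of_map_eq_gaussianReal (hX i) (hlaw i) ht, htv, sqrt_inv, sqrt_sq (by linarith),
      inv_inv]
  have key := measure_ge_le_exp_mul_mgf (s ^ 2 * (Fintype.card ι * v)) ht0
    (hY.integrable_exp_mul_sum hYmeas (s := Finset.univ) fun i _ =>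
      integrable_exp_mul_sq_of_map_eq_gaussianReal (hX i) (hlaw i) ht)
  rw [hY.mgf_sum hYmeas] at key
  simp only [Finset.sum_apply, hmgf, Finset.prod_const, Finset.card_univ] at key
  rw [← ofReal_measureReal]
  refine ENNReal.ofReal_le_ofReal (key.trans_eq ?_)
  rw [mul_pow, ← exp_nat_mul, mul_comm, ht_def]
  congr 2
  field_simp

lemma measure_norm_ge_le [Fintype ι] [Nonempty ι] {w : Ω → EuclideanSpace ℝ ι}
    (hw : Measurable w) (hind : iIndepFun (fun i ω => w ω i) μ)
    (hlaw : ∀ i, μ.map (fun ω => w ω i) = gaussianReal 0 (Fintype.card ι : ℝ≥0)⁻¹)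
    {r : ℝ} (hr : 0 ≤ r) :
    μ {ω | 1 + 2 * r ≤ ‖w ω‖} ≤ ENNReal.ofReal (exp (-2 * Fintype.card ι * r ^ 2)) := by
  have hn : (0 : ℝ) < Fintype.card ι := Nat.cast_pos.2 Fintype.card_pos
  have h := measure_sum_sq_ge_le (fun i => by fun_prop) hind (by positivity) hlaw
    (by linarith : 1 ≤ 1 + 2 * r)
  simp only [NNReal.coe_inv, NNReal.coe_natCast, mul_inv_cancel₀ hn.ne', mul_one,
    ← EuclideanSpace.real_norm_sq_eq] at h
  refine le_trans (le_of_eq_of_le ?_ h) (ENNReal.ofReal_le_ofReal ?_)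
  · congr 1
    ext ω
    exact (pow_le_pow_iff_left₀ (by positivity) (norm_nonneg _) two_ne_zero).symm
  calc ((1 + 2 * r) * exp (-((1 + 2 * r) ^ 2 - 1) / 2)) ^ Fintype.card ι
      ≤ exp (-2 * r ^ 2) ^ Fintype.card ι := by
        gcongr
        exact one_add_two_mul_mul_exp_le r
    _ = exp (-2 * Fintype.card ι * r ^ 2) := by
        rw [← exp_nat_mul]
        ring_nf

end ProbabilityTheory

theorem stmt_13_general {Ω : Type*} [MeasurableSpace Ω] (μ : Measure Ω)
    (d : ℕ) (hd : 0 < d)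
    (w : Ω → EuclideanSpace ℝ (Fin d)) (hwmeas : Measurable w)
    (hwcoord : iIndepFun (fun i ω => w ω i) μ)
    (hwlaw : ∀ i, Measure.map (fun ω => w ω i) μ = gaussianReal 0 ((d : ℝ≥0))⁻¹)
    (x : EuclideanSpace ℝ (Fin d)) (hx : ‖x‖ = Real.sqrt d)
    (δ : EuclideanSpace ℝ (Fin d)) (hδ : ‖δ‖ ≤ Real.sqrt d / 2)
    (ε : ℝ) (hε : 0 < ε) (hε' : ε ≤ 1) :
    μ {ω | ∃ δ' : EuclideanSpace ℝ (Fin d), ‖δ - δ'‖ ≤ ε ∧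
        Real.sign ⟪w ω, x + δ⟫ ≠ Real.sign ⟪w ω, x + δ'⟫} ≤
      ENNReal.ofReal (2 * ε * (1 + 2 * Real.sqrt (Real.log (2 / ε) / d))) := by
  set L := log (2 / ε)
  set s := 1 + 2 * √(L / d)
  have hdR : (0 : ℝ) < d := Nat.cast_pos.2 hd
  have hs : 1 ≤ s := by linarith [sqrt_nonneg (L / d)]
  have : Nonempty (Fin d) := ⟨⟨0, hd⟩⟩
  have htail : μ {ω | s ≤ ‖w ω‖} ≤ ENNReal.ofReal (ε ^ 2 / 4) := by
    refine (measure_norm_ge_le hwmeas hwcoord (by simpa using hwlaw) (sqrt_nonneg _)).trans_eq ?_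
    rw [Fintype.card_fin, sq_sqrt (div_nonneg (log_nonneg (by rw [le_div_iff₀ hε]; linarith))
      hdR.le), show -2 * (d : ℝ) * (L / d) = -2 * L by field_simp, exp_neg_two_mul_log_two_div hε]
  have hvar : (1 : ℝ) / 4 ≤ ‖x + δ‖ ^ 2 * (d : ℝ≥0)⁻¹ := by
    rw [NNReal.coe_inv, NNReal.coe_natCast, ← div_eq_mul_inv, le_div_iff₀ hdR]
    have h := sq_div_two_le_norm_add_sq hx hδ
    rw [div_pow, sq_sqrt hdR.le] at h
    linarith
  have hanti : μ {ω | |⟪w ω, x + δ⟫| ≤ ε * s} ≤ ENNReal.ofReal (7 / 4 * (ε * s)) := by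
    have hxδ : x + δ ≠ 0 := fun h => by norm_num [h] at hvar
    exact (measure_abs_inner_le_le hwcoord (by positivity) hwlaw hxδ _).trans
      (ENNReal.ofReal_le_ofReal (two_mul_div_sqrt_two_pi_mul_le (by positivity) hvar))
  calc _ ≤ _ := measure_mono (setOf_exists_sign_inner_ne_subset w x δ ε s)
    _ ≤ _ := measure_union_le _ _
    _ ≤ ENNReal.ofReal (ε ^ 2 / 4) + ENNReal.ofReal (7 / 4 * (ε * s)) := add_le_add htail hanti
    _ ≤ _ := by
      rw [← ENNReal.ofReal_add (by positivity) (by positivity)]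
      refine ENNReal.ofReal_le_ofReal ?_
      nlinarith

/-- Probability that some `ε`-nearby perturbation flips the sign of the preactivation. -/
theorem stmt_13 {Ω : Type*} [MeasurableSpace Ω] (μ : Measure Ω) [IsProbabilityMeasure μ]
    (d : ℕ) (hd : 0 < d)
    (w : Ω → EuclideanSpace ℝ (Fin d)) (hwmeas : Measurable w)
    (hwcoord : iIndepFun (fun i ω => w ω i) μ)
    (hwlaw : ∀ i, Measure.map (fun ω => w ω i) μ = gaussianReal 0 ((d : ℝ≥0))⁻¹)
    (x : EuclideanSpace ℝ (Fin d)) (hx : ‖x‖ = Real.sqrt d)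
    (δ : EuclideanSpace ℝ (Fin d)) (hδ : ‖δ‖ ≤ Real.sqrt d / 2)
    (ε : ℝ) (hε : 0 < ε) (hε' : ε ≤ 1) :
    μ {ω | ∃ δ' : EuclideanSpace ℝ (Fin d), ‖δ - δ'‖ ≤ ε ∧
        Real.sign ⟪w ω, x + δ⟫ ≠ Real.sign ⟪w ω, x + δ'⟫} ≤
      ENNReal.ofReal (2 * ε * (1 + 2 * Real.sqrt (Real.log (2 / ε) / d))) :=
  stmt_13_general μ d hd w hwmeas hwcoord hwlaw x hx δ hδ ε hε hε'
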